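/- arXiv:1202.4673 — 9 statements merged into one kernel-verified Lean document; each statement's English description precedes it below -/
import Mathlib

section
/- Let R be a ring and let u, v be invertible elements of R such that u + u⁻¹ and v + v⁻¹ are both central in R. Then uv + (uv)⁻¹ = vu + (vu)⁻¹. -/
/-- If `u + u⁻¹` and `v + v⁻¹` are central, then `uv + (uv)⁻¹ = vu + (vu)⁻¹`. -/
theorem stmt_0 {R : Type*} [Ring R] (u v : Rˣ)
    (hu : ∀ r : R, ((u : R) + ((u⁻¹ : Rˣ) : R)) * r = r * ((u : R) + ((u⁻¹ : Rˣ) : R)))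
    (hv : ∀ r : R, ((v : R) + ((v⁻¹ : Rˣ) : R)) * r = r * ((v : R) + ((v⁻¹ : Rˣ) : R))) :
    ((u * v : Rˣ) : R) + (((u * v)⁻¹ : Rˣ) : R) =
      ((v * u : Rˣ) : R) + (((v * u)⁻¹ : Rˣ) : R) := by
  have h1 := hu (v : R)
  have h2 := hv ((u⁻¹ : Rˣ) : R)
  rw [add_mul, mul_add] at h1 h2
  simp only [mul_inv_rev, Units.val_mul]
  have h3 : ((u : R) * v + (v⁻¹ : Rˣ) * (u⁻¹ : Rˣ)) + ((u⁻¹ : Rˣ) * v + (v : R) * (u⁻¹ : Rˣ))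
      = ((v : R) * u + (u⁻¹ : Rˣ) * (v⁻¹ : Rˣ)) + ((u⁻¹ : Rˣ) * v + (v : R) * (u⁻¹ : Rˣ)) := by
    calc ((u : R) * v + (v⁻¹ : Rˣ) * (u⁻¹ : Rˣ)) + ((u⁻¹ : Rˣ) * v + (v : R) * (u⁻¹ : Rˣ))
        = ((u : R) * v + (u⁻¹ : Rˣ) * v) + ((v : R) * (u⁻¹ : Rˣ) + (v⁻¹ : Rˣ) * (u⁻¹ : Rˣ)) := by
          abel
      _ = ((v : R) * u + (v : R) * (u⁻¹ : Rˣ)) + ((u⁻¹ : Rˣ) * v + (u⁻¹ : Rˣ) * (v⁻¹ : Rˣ)) := by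
          rw [h1, h2]
      _ = _ := by abel
  exact add_right_cancel h3
end

section
/- Let R be a ring and let u, v be invertible elements of R such that u + u⁻¹ and v + v⁻¹ are both central in R. Then the element uv + (uv)⁻¹ commutes with u and with v. -/
lemma aux_comm {R : Type*} [Ring R] (a a' b b' : R)
    (haa' : a * a' = 1) (ha'a : a' * a = 1) (hbb' : b * b' = 1) (hb'b : b' * b = 1)
    (hA : ∀ r : R, (a + a') * r = r * (a + a'))
    (hB : ∀ r : R, (b + b') * r = r * (b + b')) :
    (a * b + b' * a') * a = a * (a * b + b' * a') ∧
    (a * b + b' * a') * b = b * (a * b + b' * a') := by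
  have e1 : b * a = a * b + a * b' - b' * a := by
    have h := hB a
    rw [add_mul, mul_add] at h
    exact eq_sub_of_add_eq h
  have e2 : a * b' = b' * a + b' * a' - a' * b' := by
    have h := hA b'
    rw [add_mul, mul_add] at h
    exact eq_sub_of_add_eq h
  have e3 : a' * b = b * a + b * a' - a * b := by
    have h := hA b
    rw [add_mul, mul_add] at h
    exact eq_sub_of_add_eq' h
  have e1' : b' * a = a * b + a * b' - b * a := by
    have h := hB a
    rw [add_mul, mul_add] at h
    exact eq_sub_of_add_eq' h
  constructor
  · calc (a * b + b' * a') * a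
        = a * (b * a) + b' * (a' * a) := by noncomm_ring
      _ = a * (a * b + a * b' - b' * a) + b' * 1 := by rw [e1, ha'a]
      _ = a * a * b + a * (a * b') - a * (b' * a) + b' := by noncomm_ring
      _ = a * a * b + a * (b' * a + b' * a' - a' * b') - a * (b' * a) + b' := by rw [e2]
      _ = a * a * b + a * b' * a' - (a * a') * b' + b' := by noncomm_ring
      _ = a * a * b + a * b' * a' - 1 * b' + b' := by rw [haa']
      _ = a * (a * b + b' * a') := by noncomm_ring
  · calc (a * b + b' * a') * b
        = a * b * b + b' * (a' * b) := by noncomm_ring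
      _ = a * b * b + b' * (b * a + b * a' - a * b) := by rw [e3]
      _ = a * b * b + (b' * b) * a + (b' * b) * a' - (b' * a) * b := by noncomm_ring
      _ = a * b * b + 1 * a + 1 * a' - (a * b + a * b' - b * a) * b := by rw [hb'b, e1']
      _ = b * a * b + a' + (a - a * (b' * b)) := by noncomm_ring
      _ = b * a * b + a' + (a - a * 1) := by rw [hb'b]
      _ = b * a * b + 1 * a' := by noncomm_ring
      _ = b * a * b + (b * b') * a' := by rw [hbb']
      _ = b * (a * b + b' * a') := by noncomm_ring

/-- If `u + u⁻¹` and `v + v⁻¹` are central, then `uv + (uv)⁻¹` commutes with `u` and `v`. -/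
theorem stmt_1 {R : Type*} [Ring R] (u v : Rˣ)
    (hu : ∀ r : R, ((u : R) + ((u⁻¹ : Rˣ) : R)) * r = r * ((u : R) + ((u⁻¹ : Rˣ) : R)))
    (hv : ∀ r : R, ((v : R) + ((v⁻¹ : Rˣ) : R)) * r = r * ((v : R) + ((v⁻¹ : Rˣ) : R))) :
    (((u * v : Rˣ) : R) + (((u * v)⁻¹ : Rˣ) : R)) * (u : R) =
        (u : R) * (((u * v : Rˣ) : R) + (((u * v)⁻¹ : Rˣ) : R)) ∧
      (((u * v : Rˣ) : R) + (((u * v)⁻¹ : Rˣ) : R)) * (v : R) =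
        (v : R) * (((u * v : Rˣ) : R) + (((u * v)⁻¹ : Rˣ) : R)) := by
  have key := aux_comm (u : R) ((u⁻¹ : Rˣ) : R) (v : R) ((v⁻¹ : Rˣ) : R)
    (by exact_mod_cast u.mul_inv) (by exact_mod_cast u.inv_mul)
    (by exact_mod_cast v.mul_inv) (by exact_mod_cast v.inv_mul) hu hv
  simpa [mul_inv_rev, Units.val_mul] using key
end

section
/- In the Laurent polynomial ring F[λ, λ⁻¹] over a field F, the family of elements λ^k (λ + λ⁻¹)^ℓ, where k ∈ {0,1} and ℓ ∈ ℕ, forms a basis of F[λ, λ⁻¹] as an F-vector space. -/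
open LaurentPolynomial Finset

lemma expand_aux (F : Type*) [Field F] (k : ℤ) (ℓ : ℕ) :
    (T k * (T 1 + T (-1)) ^ ℓ : LaurentPolynomial F)
      = ∑ i ∈ Finset.range (ℓ + 1), ((ℓ.choose i : F)) • T (k + 2 * i - ℓ) := by
  rw [add_pow, Finset.mul_sum]
  refine Finset.sum_congr rfl fun i hi => ?_
  rw [Finset.mem_range, Nat.lt_succ_iff] at hi
  rw [T_pow, T_pow, mul_one]
  have h1 : ((ℓ - i : ℕ) : ℤ) = (ℓ : ℤ) - i := by omega
  have h2 : (k + 2 * i - ℓ) = k + ((i : ℤ) + ((ℓ - i : ℕ) * (-1) : ℤ)) := by rw [h1]; ring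
  rw [h2, T_add, T_add]
  rw [Nat.cast_smul_eq_nsmul F, nsmul_eq_mul]
  ring

lemma coeff_aux (F : Type*) [Field F] (k : ℤ) (ℓ : ℕ) (d : ℤ) :
    (T k * (T 1 + T (-1)) ^ ℓ : LaurentPolynomial F).coeff d
      = ∑ i ∈ Finset.range (ℓ + 1), (ℓ.choose i : F) * (if k + 2 * i - ℓ = d then 1 else 0) := by
  rw [expand_aux]
  have hsum : (∑ i ∈ Finset.range (ℓ + 1), (ℓ.choose i : F) • T (k + 2 * i - ℓ) : LaurentPolynomial F).coeff d
      = ∑ i ∈ Finset.range (ℓ + 1), ((ℓ.choose i : F) • T (k + 2 * i - ℓ) : LaurentPolynomial F).coeff d := by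
    rw [AddMonoidAlgebra.coeff_sum, Finsupp.finset_sum_apply]
  rw [hsum]
  refine Finset.sum_congr rfl fun i _ => ?_
  have h4 : ((ℓ.choose i : F) • T (k + 2 * i - ℓ) : LaurentPolynomial F).coeff d
      = (ℓ.choose i : F) * (T (k + 2 * i - ℓ) : LaurentPolynomial F).coeff d := rfl
  rw [h4, T_apply]

noncomputable def vfam (F : Type*) [Field F] : Fin 2 × ℕ → LaurentPolynomial F :=
  fun p => T ((p.1 : ℕ) : ℤ) * (T 1 + T (-1)) ^ p.2

lemma T_mem_span (F : Type*) [Field F] (N : ℕ) :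
    (T (N : ℤ) ∈ Submodule.span F (Set.range (vfam F))) ∧
    (T (-(N : ℤ)) ∈ Submodule.span F (Set.range (vfam F))) := by
  induction N using Nat.strong_induction_on with
  | _ N ih =>
    set S := Submodule.span F (Set.range (vfam F)) with hS
    have hvmem : ∀ p, vfam F p ∈ S := fun p => Submodule.subset_span ⟨p, rfl⟩
    match N with
    | 0 =>
      have h0 : vfam F ((0 : Fin 2), 0) = 1 := by simp [vfam]
      constructor <;>
        · simp only [Nat.cast_zero, neg_zero, T_zero]
          rw [← h0]; exact hvmem _
    | M + 1 =>
      have hT : ∀ m : ℤ, m.natAbs ≤ M → T m ∈ S := by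
        intro m hm
        rcases Int.natAbs_eq m with h | h
        · rw [h]; exact (ih m.natAbs (by omega)).1
        · rw [h]; exact (ih m.natAbs (by omega)).2
      have hpos : T (((M + 1 : ℕ)) : ℤ) ∈ S := by
        have hexp := expand_aux F 1 M
        rw [Finset.sum_range_succ] at hexp
        have harg : (1 + 2 * (M : ℤ) - M) = ((M + 1 : ℕ) : ℤ) := by push_cast; ring
        rw [harg, Nat.choose_self, Nat.cast_one, one_smul] at hexp
        have hv : vfam F ((1 : Fin 2), M) = T 1 * (T 1 + T (-1)) ^ M := by
          simp [vfam]
        have heq : T ((M + 1 : ℕ) : ℤ)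
            = vfam F ((1 : Fin 2), M)
              - ∑ i ∈ Finset.range M, (M.choose i : F) • T (1 + 2 * i - M) := by
          rw [hv, hexp]; ring
        rw [heq]
        refine Submodule.sub_mem _ (hvmem _) (Submodule.sum_mem _ fun i hi => ?_)
        rw [Finset.mem_range] at hi
        exact Submodule.smul_mem _ _ (hT _ (by omega))
      refine ⟨hpos, ?_⟩
      have hexp := expand_aux F 0 (M + 1)
      rw [Finset.sum_range_succ'] at hexp
      have harg : ((0 : ℤ) + 2 * (0 : ℕ) - ((M + 1 : ℕ) : ℤ)) = -((M + 1 : ℕ) : ℤ) := by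
        push_cast; ring
      rw [harg, Nat.choose_zero_right, Nat.cast_one, one_smul] at hexp
      have hv : vfam F ((0 : Fin 2), M + 1) = T 0 * (T 1 + T (-1)) ^ (M + 1) := by
        simp [vfam]
      have heq : T (-((M + 1 : ℕ) : ℤ))
          = vfam F ((0 : Fin 2), M + 1)
            - ∑ i ∈ Finset.range (M + 1),
                ((M + 1).choose (i + 1) : F) • T (0 + 2 * (i + 1 : ℕ) - ((M + 1 : ℕ) : ℤ)) := by
        rw [hv, hexp]; ring
      rw [heq]
      refine Submodule.sub_mem _ (hvmem _) (Submodule.sum_mem _ fun i hi => ?_)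
      rw [Finset.mem_range] at hi
      refine Submodule.smul_mem _ _ ?_
      by_cases hiM : i = M
      · have : ((0 : ℤ) + 2 * (i + 1 : ℕ) - ((M + 1 : ℕ) : ℤ)) = ((M + 1 : ℕ) : ℤ) := by
          push_cast; omega
        rw [this]; exact hpos
      · exact hT _ (by omega)

lemma eval_sum_aux (F : Type*) [Field F] {ι : Type*} (s : Finset ι)
    (f : ι → LaurentPolynomial F) (d : ℤ) :
    (∑ i ∈ s, f i).coeff d = ∑ i ∈ s, (f i).coeff d := by
  rw [AddMonoidAlgebra.coeff_sum, Finsupp.finset_sum_apply]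

lemma li_aux (F : Type*) [Field F] : LinearIndependent F (vfam F) := by
  rw [linearIndependent_iff]
  intro l hl
  by_contra hne
  obtain ⟨⟨k, ℓ⟩, hp, hmax⟩ := l.support.exists_max_image (fun q => 2 * q.2 + (q.1 : ℕ))
    (Finsupp.support_nonempty_iff.mpr hne)
  set e : ℤ := if (k : ℕ) = 0 then -(ℓ : ℤ) else (ℓ : ℤ) + 1 with he
  have happ := congrArg (fun g : LaurentPolynomial F => g.coeff e) hl
  simp only [Finsupp.linearCombination_apply] at happ
  rw [Finsupp.sum] at happ
  rw [eval_sum_aux] at happ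
  have hk2 : (k : ℕ) < 2 := k.isLt
  have hcoeff : ∀ q ∈ l.support, q ≠ (k, ℓ) → (vfam F q).coeff e = 0 := by
    rintro ⟨k', ℓ'⟩ hq hneq
    have hmaxq : 2 * ℓ' + (k' : ℕ) ≤ 2 * ℓ + (k : ℕ) := hmax _ hq
    have hk2' : (k' : ℕ) < 2 := k'.isLt
    have hne2 : (k' : ℕ) ≠ (k : ℕ) ∨ ℓ' ≠ ℓ := by
      by_contra h
      push_neg at h
      exact hneq (by rw [Prod.mk.injEq]; exact ⟨Fin.val_injective h.1, h.2⟩)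
    show (T ((k' : ℕ) : ℤ) * (T 1 + T (-1)) ^ ℓ' : LaurentPolynomial F).coeff e = 0
    rw [coeff_aux]
    refine Finset.sum_eq_zero fun i hi => ?_
    rw [Finset.mem_range] at hi
    rw [if_neg, mul_zero]
    intro hc
    by_cases h0 : (k : ℕ) = 0 <;> simp only [he, h0, if_pos, if_neg, if_true, if_false] at hc <;>
      omega
  have hself : (vfam F (k, ℓ)).coeff e = 1 := by
    show (T ((k : ℕ) : ℤ) * (T 1 + T (-1)) ^ ℓ : LaurentPolynomial F).coeff e = 1
    rw [coeff_aux]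
    by_cases h0 : (k : ℕ) = 0
    · have hee : e = -(ℓ : ℤ) := by rw [he, if_pos h0]
      rw [Finset.sum_eq_single_of_mem 0 (by simp)]
      · rw [if_pos (by omega), Nat.choose_zero_right, Nat.cast_one, mul_one]
      · intro b hb hb0
        rw [Finset.mem_range] at hb
        rw [if_neg (by omega), mul_zero]
    · have hee : e = (ℓ : ℤ) + 1 := by rw [he, if_neg h0]
      rw [Finset.sum_eq_single_of_mem ℓ (by simp)]
      · rw [if_pos (by omega), Nat.choose_self, Nat.cast_one, mul_one]
      · intro b hb hb0
        rw [Finset.mem_range] at hb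
        rw [if_neg (by omega), mul_zero]
  have hfin : l (k, ℓ) = 0 := by
    have h1 : ∑ q ∈ l.support, l q * (vfam F q).coeff e = l (k, ℓ) := by
      rw [Finset.sum_eq_single_of_mem (k, ℓ) hp]
      · rw [hself, mul_one]
      · intro q hq hq'
        rw [hcoeff q hq hq', mul_zero]
    have h2 : ∀ q ∈ l.support, (l q • vfam F q).coeff e = l q * (vfam F q).coeff e := fun _ _ => rfl
    rw [Finset.sum_congr rfl h2] at happ
    rw [h1] at happ
    exact happ
  exact (Finsupp.mem_support_iff.mp hp) hfin

/-- The elements `λ^k (λ + λ⁻¹)^ℓ`, `k ∈ {0,1}`, `ℓ ∈ ℕ`, form a basis of the Laurent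
polynomial algebra `F[λ, λ⁻¹]` over the field `F`. -/
theorem stmt_2 (F : Type*) [Field F] :
    ∃ b : Module.Basis (Fin 2 × ℕ) F (LaurentPolynomial F),
      ∀ (k : Fin 2) (ℓ : ℕ),
        b (k, ℓ) = T ((k : ℕ) : ℤ) * (T 1 + T (-1)) ^ ℓ := by
  have hsp : ⊤ ≤ Submodule.span F (Set.range (vfam F)) := by
    rintro f -
    have h1 : ∀ (n : ℤ) (r : F), (AddMonoidAlgebra.single n r : LaurentPolynomial F) = r • T n := by
      intro n r
      rw [show (T n : LaurentPolynomial F) = AddMonoidAlgebra.single n 1 from rfl, AddMonoidAlgebra.smul_single,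
        smul_eq_mul, mul_one]
    have hrep : f = Finsupp.sum f.coeff fun n r => r • T n := by
      conv_lhs => rw [← AddMonoidAlgebra.sum_coeff_single f]
      exact Finsupp.sum_congr fun n _ => h1 n (f.coeff n)
    rw [hrep, Finsupp.sum]
    refine Submodule.sum_mem _ fun n _ => Submodule.smul_mem _ _ ?_
    rcases Int.natAbs_eq n with h | h
    · rw [h]; exact (T_mem_span F n.natAbs).1
    · rw [h]; exact (T_mem_span F n.natAbs).2
  exact ⟨Module.Basis.mk (li_aux F) hsp, fun k ℓ => by rw [Module.Basis.mk_apply]; rfl⟩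
end

section
/- Let F be a field and let x₁, x₂, x₃, x₄ be the variables of the polynomial ring F[x₁, x₂, x₃, x₄]. Define y₁ = x₁x₂x₃x₄ + x₁² + x₂² + x₃² + x₄², y₂ = x₁x₂ + x₃x₄, y₃ = x₁x₃ + x₂x₄, y₄ = x₁x₄ + x₂x₃. Then y₁, y₂, y₃, y₄ are algebraically independent over F. -/
open MvPolynomial

namespace Stmt4Aux

variable {F : Type*} [Field F]

/-- The exponent of the monomial `∏ (X 0 * X i) ^ e i`. -/
noncomputable def uexp (e : Fin 4 →₀ ℕ) : Fin 4 →₀ ℕ :=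
  Finsupp.single 0 (2 * e 0 + e 1 + e 2 + e 3) + Finsupp.single 1 (e 1) +
    Finsupp.single 2 (e 2) + Finsupp.single 3 (e 3)

lemma uexp_injective : Function.Injective (uexp) := by
  intro e e' h
  have h0 := congrArg (fun f : Fin 4 →₀ ℕ => f 0) h
  have h1 := congrArg (fun f : Fin 4 →₀ ℕ => f 1) h
  have h2 := congrArg (fun f : Fin 4 →₀ ℕ => f 2) h
  have h3 := congrArg (fun f : Fin 4 →₀ ℕ => f 3) h
  simp [uexp, Finsupp.single_apply] at h0 h1 h2 h3
  ext j
  fin_cases j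
  · show e 0 = e' 0; omega
  · show e 1 = e' 1; omega
  · show e 2 = e' 2; omega
  · show e 3 = e' 3; omega

lemma prod_leading (e : Fin 4 →₀ ℕ) :
    (∏ i : Fin 4, (X 0 * X i : MvPolynomial (Fin 4) F) ^ e i) = monomial (uexp e) 1 := by
  have h : (∏ i : Fin 4, (X 0 * X i : MvPolynomial (Fin 4) F) ^ e i)
      = X 0 ^ (2 * e 0 + e 1 + e 2 + e 3) * X 1 ^ e 1 * X 2 ^ e 2 * X 3 ^ e 3 := by
    rw [Fin.prod_univ_four]; ring
  rw [h, X_pow_eq_monomial, X_pow_eq_monomial, X_pow_eq_monomial, X_pow_eq_monomial,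
    monomial_mul, monomial_mul, monomial_mul]
  simp only [one_mul]
  rfl

lemma key (d : Fin 4 → ℕ) (Y : Fin 4 → Polynomial (MvPolynomial (Fin 4) F))
    (hc0 : ∀ i, ∀ k, d i < k → (Y i).coeff k = 0)
    (hcd : ∀ i, (Y i).coeff (d i) = X 0 * X i) :
    AlgebraicIndependent F Y := by
  have hXX : ∀ i : Fin 4, (X 0 * X i : MvPolynomial (Fin 4) F) ≠ 0 :=
    fun i => mul_ne_zero (X_ne_zero _) (X_ne_zero _)
  have hY0 : ∀ i, Y i ≠ 0 := by
    intro i h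
    exact hXX i (by rw [← hcd i, h, Polynomial.coeff_zero])
  have hdeg : ∀ i, (Y i).natDegree = d i := by
    intro i
    refine le_antisymm (Polynomial.natDegree_le_iff_coeff_eq_zero.mpr (hc0 i)) ?_
    exact Polynomial.le_natDegree_of_ne_zero (by rw [hcd i]; exact hXX i)
  have hlead : ∀ i, (Y i).leadingCoeff = X 0 * X i := by
    intro i; rw [Polynomial.leadingCoeff, hdeg i, hcd i]
  rw [algebraicIndependent_iff]
  intro p hp
  by_contra hne
  set P : (Fin 4 →₀ ℕ) → Polynomial (MvPolynomial (Fin 4) F) :=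
    fun e => ∏ i, Y i ^ e i with hP
  have hPdeg : ∀ e, (P e).natDegree = ∑ i, e i * d i := by
    intro e
    rw [hP, Polynomial.natDegree_prod _ _ (fun i _ => pow_ne_zero _ (hY0 i))]
    simp [Polynomial.natDegree_pow, hdeg]
  have hPlead : ∀ e, (P e).leadingCoeff = monomial (uexp e) 1 := by
    intro e
    rw [hP, Polynomial.leadingCoeff_prod]
    simp_rw [Polynomial.leadingCoeff_pow, hlead]
    exact prod_leading e
  have hPcoeff : ∀ e, (P e).coeff (∑ i, e i * d i) = monomial (uexp e) 1 := by
    intro e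
    rw [← hPdeg e, Polynomial.coeff_natDegree, hPlead e]
  obtain ⟨e₀, he₀, hmax⟩ :=
    p.support.exists_max_image (fun e => ∑ i, e i * d i)
      (support_nonempty.mpr hne)
  set m := ∑ i, e₀ i * d i with hm
  have hexp : (aeval Y) p =
      ∑ e ∈ p.support, Polynomial.C (MvPolynomial.C (coeff e p)) * P e := by
    conv_lhs => rw [p.as_sum]
    rw [map_sum]
    refine Finset.sum_congr rfl fun e _ => ?_
    rw [aeval_monomial, Finsupp.prod_pow]
    rw [Polynomial.algebraMap_apply, MvPolynomial.algebraMap_eq]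
  have h0 : ((aeval Y) p).coeff m =
      ∑ e ∈ p.support, MvPolynomial.C (coeff e p) * (P e).coeff m := by
    rw [hexp, Polynomial.finset_sum_coeff]
    exact Finset.sum_congr rfl fun e _ => by rw [Polynomial.coeff_C_mul]
  have h1 : MvPolynomial.coeff (uexp e₀) (((aeval Y) p).coeff m) = coeff e₀ p := by
    rw [h0, coeff_sum]
    rw [Finset.sum_eq_single e₀]
    · rw [hm, hPcoeff e₀, C_mul_monomial, coeff_monomial]
      simp
    · intro e he hne'
      rcases lt_or_eq_of_le (hmax e he) with hlt | heq
      · rw [Polynomial.coeff_eq_zero_of_natDegree_lt (by rw [hPdeg e]; exact hlt),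
          mul_zero, coeff_zero]
      · rw [show m = ∑ i, e i * d i from heq.symm, hPcoeff e, C_mul_monomial,
          coeff_monomial, if_neg (fun h => hne' (uexp_injective h))]
    · intro h; exact absurd he₀ h
  rw [hp] at h1
  simp only [Polynomial.coeff_zero, coeff_zero] at h1
  exact (mem_support_iff.mp he₀) h1.symm

end Stmt4Aux

/-- The elements `y₁ = x₁x₂x₃x₄ + x₁² + x₂² + x₃² + x₄²`, `y₂ = x₁x₂ + x₃x₄`,
`y₃ = x₁x₃ + x₂x₄`, `y₄ = x₁x₄ + x₂x₃` of `F[x₁,x₂,x₃,x₄]` are algebraically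
independent over the field `F`. -/
theorem stmt_4 (F : Type*) [Field F] :
    AlgebraicIndependent F
      ![(X 0 * X 1 * X 2 * X 3 + X 0 ^ 2 + X 1 ^ 2 + X 2 ^ 2 + X 3 ^ 2 :
          MvPolynomial (Fin 4) F),
        X 0 * X 1 + X 2 * X 3,
        X 0 * X 2 + X 1 * X 3,
        X 0 * X 3 + X 1 * X 2] := by
  classical
  set g : Fin 4 → Polynomial (MvPolynomial (Fin 4) F) :=
    ![Polynomial.C (X 0) * Polynomial.X ^ 8,
      Polynomial.C (X 1) * Polynomial.X ^ 4,
      Polynomial.C (X 2) * Polynomial.X ^ 2,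
      Polynomial.C (X 3) * Polynomial.X ^ 1] with hg
  refine AlgebraicIndependent.of_comp (aeval g) ?_
  have him : (⇑(aeval g)) ∘
      ![(X 0 * X 1 * X 2 * X 3 + X 0 ^ 2 + X 1 ^ 2 + X 2 ^ 2 + X 3 ^ 2 :
          MvPolynomial (Fin 4) F),
        X 0 * X 1 + X 2 * X 3,
        X 0 * X 2 + X 1 * X 3,
        X 0 * X 3 + X 1 * X 2] =
      ![Polynomial.C (X 0 * X 1 * X 2 * X 3) * Polynomial.X ^ 15
          + Polynomial.C (X 0 * X 0) * Polynomial.X ^ 16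
          + Polynomial.C (X 1 * X 1) * Polynomial.X ^ 8
          + Polynomial.C (X 2 * X 2) * Polynomial.X ^ 4
          + Polynomial.C (X 3 * X 3) * Polynomial.X ^ 2,
        Polynomial.C (X 0 * X 1) * Polynomial.X ^ 12
          + Polynomial.C (X 2 * X 3) * Polynomial.X ^ 3,
        Polynomial.C (X 0 * X 2) * Polynomial.X ^ 10
          + Polynomial.C (X 1 * X 3) * Polynomial.X ^ 5,
        Polynomial.C (X 0 * X 3) * Polynomial.X ^ 9
          + Polynomial.C (X 1 * X 2) * Polynomial.X ^ 6] := by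
    funext i
    fin_cases i
    · show (aeval g)
          (X 0 * X 1 * X 2 * X 3 + X 0 ^ 2 + X 1 ^ 2 + X 2 ^ 2 + X 3 ^ 2) =
          Polynomial.C (X 0 * X 1 * X 2 * X 3) * Polynomial.X ^ 15
          + Polynomial.C (X 0 * X 0) * Polynomial.X ^ 16
          + Polynomial.C (X 1 * X 1) * Polynomial.X ^ 8
          + Polynomial.C (X 2 * X 2) * Polynomial.X ^ 4
          + Polynomial.C (X 3 * X 3) * Polynomial.X ^ 2
      simp only [map_add, map_mul, map_pow, aeval_X, hg,
        Matrix.cons_val_zero, Matrix.cons_val_one, Matrix.head_cons,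
        Matrix.cons_val_two, Matrix.tail_cons, Matrix.cons_val_three]
      ring
    · show (aeval g) (X 0 * X 1 + X 2 * X 3) =
          Polynomial.C (X 0 * X 1) * Polynomial.X ^ 12
          + Polynomial.C (X 2 * X 3) * Polynomial.X ^ 3
      simp only [map_add, map_mul, aeval_X, hg,
        Matrix.cons_val_zero, Matrix.cons_val_one, Matrix.head_cons,
        Matrix.cons_val_two, Matrix.tail_cons, Matrix.cons_val_three]
      ring
    · show (aeval g) (X 0 * X 2 + X 1 * X 3) =
          Polynomial.C (X 0 * X 2) * Polynomial.X ^ 10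
          + Polynomial.C (X 1 * X 3) * Polynomial.X ^ 5
      simp only [map_add, map_mul, aeval_X, hg,
        Matrix.cons_val_zero, Matrix.cons_val_one, Matrix.head_cons,
        Matrix.cons_val_two, Matrix.tail_cons, Matrix.cons_val_three]
      ring
    · show (aeval g) (X 0 * X 3 + X 1 * X 2) =
          Polynomial.C (X 0 * X 3) * Polynomial.X ^ 9
          + Polynomial.C (X 1 * X 2) * Polynomial.X ^ 6
      simp only [map_add, map_mul, aeval_X, hg,
        Matrix.cons_val_zero, Matrix.cons_val_one, Matrix.head_cons,
        Matrix.cons_val_two, Matrix.tail_cons, Matrix.cons_val_three]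
      ring
  rw [him]
  refine Stmt4Aux.key ![16, 12, 10, 9] _ ?_ ?_
  · intro i k hk
    fin_cases i <;>
      simp only [Fin.zero_eta, Fin.mk_one, Fin.reduceFinMk, Fin.isValue, Matrix.cons_val_zero,
        Matrix.cons_val_one, Matrix.cons_val_two, Matrix.cons_val_three, Matrix.head_cons,
        Matrix.tail_cons] at hk ⊢ <;>
      simp only [Polynomial.coeff_add, Polynomial.coeff_C_mul, Polynomial.coeff_X_pow] <;>
      split_ifs <;> first | (exfalso; omega) | simp
  · intro i
    fin_cases i <;>
      simp only [Fin.zero_eta, Fin.mk_one, Fin.reduceFinMk, Fin.isValue, Matrix.cons_val_zero,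
        Matrix.cons_val_one, Matrix.cons_val_two, Matrix.cons_val_three, Matrix.head_cons,
        Matrix.tail_cons] <;>
      simp only [Polynomial.coeff_add, Polynomial.coeff_C_mul, Polynomial.coeff_X_pow] <;>
      split_ifs <;> first | (exfalso; omega) | simp
end

section
/- Let Ĥ_q be the universal DAHA of type (C₁∨, C₁) over a field F with q ∈ F, q ≠ 0, q⁴ ≠ 1. Then there exists an F-algebra automorphism of Ĥ_q sending t₀ ↦ t₁ ↦ t₂ ↦ t₃ ↦ t₀. -/
noncomputable section

open FreeAlgebra

/-- Defining relations of the universal DAHA of type `(C₁∨, C₁)`.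
Generators: `(i, false)` is `tᵢ`, `(i, true)` is `tᵢ⁻¹`. -/
inductive DAHARel (F : Type*) [Field F] (q : F) :
    FreeAlgebra F (Fin 4 × Bool) → FreeAlgebra F (Fin 4 × Bool) → Prop
  | invRight (i : Fin 4) : DAHARel F q (ι F (i, false) * ι F (i, true)) 1
  | invLeft (i : Fin 4) : DAHARel F q (ι F (i, true) * ι F (i, false)) 1
  | central (i : Fin 4) (g : Fin 4 × Bool) :
      DAHARel F q ((ι F (i, false) + ι F (i, true)) * ι F g)
        (ι F g * (ι F (i, false) + ι F (i, true)))
  | prodRel : DAHARel F q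
      (ι F ((0 : Fin 4), false) * ι F ((1 : Fin 4), false) * ι F ((2 : Fin 4), false) *
        ι F ((3 : Fin 4), false))
      (algebraMap F (FreeAlgebra F (Fin 4 × Bool)) q⁻¹)

/-- The universal DAHA of type `(C₁∨, C₁)`. -/
abbrev DAHA (F : Type*) [Field F] (q : F) := RingQuot (DAHARel F q)

/-- The generator `tᵢ` of the universal DAHA. -/
def DAHA.t {F : Type*} [Field F] (q : F) (i : Fin 4) : DAHA F q :=
  RingQuot.mkAlgHom F (DAHARel F q) (ι F (i, false))

/-- The generator `tᵢ⁻¹` of the universal DAHA. -/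
def DAHA.tInv {F : Type*} [Field F] (q : F) (i : Fin 4) : DAHA F q :=
  RingQuot.mkAlgHom F (DAHARel F q) (ι F (i, true))

/-- `X = t₃ t₀`. -/
def DAHA.X {F : Type*} [Field F] (q : F) : DAHA F q := DAHA.t q 3 * DAHA.t q 0

/-- `X⁻¹ = t₀⁻¹ t₃⁻¹`. -/
def DAHA.Xinv {F : Type*} [Field F] (q : F) : DAHA F q := DAHA.tInv q 0 * DAHA.tInv q 3

/-- `Y = t₀ t₁`. -/
def DAHA.Y {F : Type*} [Field F] (q : F) : DAHA F q := DAHA.t q 0 * DAHA.t q 1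

/-- `Y⁻¹ = t₁⁻¹ t₀⁻¹`. -/
def DAHA.Yinv {F : Type*} [Field F] (q : F) : DAHA F q := DAHA.tInv q 1 * DAHA.tInv q 0

/-- `Tᵢ = tᵢ + tᵢ⁻¹`. -/
def DAHA.T {F : Type*} [Field F] (q : F) (i : Fin 4) : DAHA F q := DAHA.t q i + DAHA.tInv q i

section Aux

variable {F : Type*} [Field F] {q : F}

lemma DAHA.t_tInv (i : Fin 4) : DAHA.t q i * DAHA.tInv q i = 1 := by
  rw [DAHA.t, DAHA.tInv, ← map_mul, RingQuot.mkAlgHom_rel F (DAHARel.invRight i), map_one]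

lemma DAHA.tInv_t (i : Fin 4) : DAHA.tInv q i * DAHA.t q i = 1 := by
  rw [DAHA.t, DAHA.tInv, ← map_mul, RingQuot.mkAlgHom_rel F (DAHARel.invLeft i), map_one]

lemma DAHA.prod_eq :
    DAHA.t q 0 * DAHA.t q 1 * DAHA.t q 2 * DAHA.t q 3 = algebraMap F (DAHA F q) q⁻¹ := by
  rw [DAHA.t, DAHA.t, DAHA.t, DAHA.t, ← map_mul, ← map_mul, ← map_mul,
    RingQuot.mkAlgHom_rel F DAHARel.prodRel, AlgHom.commutes]

lemma DAHA.prod_eq1 :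
    DAHA.t q 1 * DAHA.t q 2 * DAHA.t q 3 * DAHA.t q 0 = algebraMap F (DAHA F q) q⁻¹ := by
  have e : DAHA.t q 1 * DAHA.t q 2 * DAHA.t q 3
      = DAHA.tInv q 0 * algebraMap F (DAHA F q) q⁻¹ := by
    have h := congrArg (fun z => DAHA.tInv q 0 * z) (DAHA.prod_eq (q := q))
    simpa only [← mul_assoc, DAHA.tInv_t, one_mul] using h
  rw [e, mul_assoc, Algebra.commutes, ← mul_assoc, DAHA.tInv_t, one_mul]

lemma DAHA.prod_eq3 :
    DAHA.t q 3 * DAHA.t q 0 * DAHA.t q 1 * DAHA.t q 2 = algebraMap F (DAHA F q) q⁻¹ := by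
  have e : DAHA.t q 0 * DAHA.t q 1 * DAHA.t q 2
      = algebraMap F (DAHA F q) q⁻¹ * DAHA.tInv q 3 := by
    have h := congrArg (fun z => z * DAHA.tInv q 3) (DAHA.prod_eq (q := q))
    simpa only [mul_assoc, DAHA.t_tInv, mul_one] using h
  rw [mul_assoc, mul_assoc, ← mul_assoc (DAHA.t q 0), e, ← mul_assoc, ← Algebra.commutes,
    mul_assoc, DAHA.t_tInv, mul_one]

/-- The shift-by-`k` algebra endomorphism, valid when the rotated product relation holds. -/
def DAHA.cyc (q : F) (k : Fin 4)
    (hk : DAHA.t q (0 + k) * DAHA.t q (1 + k) * DAHA.t q (2 + k) * DAHA.t q (3 + k)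
      = algebraMap F (DAHA F q) q⁻¹) : DAHA F q →ₐ[F] DAHA F q :=
  RingQuot.liftAlgHom F
    ⟨FreeAlgebra.lift F fun p => RingQuot.mkAlgHom F (DAHARel F q) (ι F (p.1 + k, p.2)), by
      intro x y h
      induction h with
      | invRight i =>
          simp only [map_mul, map_one, lift_ι_apply]
          exact DAHA.t_tInv (i + k)
      | invLeft i =>
          simp only [map_mul, map_one, lift_ι_apply]
          exact DAHA.tInv_t (i + k)
      | central i g =>
          simp only [map_mul, map_add, lift_ι_apply]
          rw [← map_add, ← map_mul, ← map_mul,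
            RingQuot.mkAlgHom_rel F (DAHARel.central (i + k) (g.1 + k, g.2))]
      | prodRel =>
          simp only [map_mul, lift_ι_apply, AlgHom.commutes]
          exact hk⟩

lemma DAHA.cyc_mk (k : Fin 4) (hk) (p : Fin 4 × Bool) :
    DAHA.cyc q k hk (RingQuot.mkAlgHom F (DAHARel F q) (ι F p))
      = RingQuot.mkAlgHom F (DAHARel F q) (ι F (p.1 + k, p.2)) := by
  rw [DAHA.cyc, RingQuot.liftAlgHom_mkAlgHom_apply, lift_ι_apply]

lemma DAHA.cyc_t (k : Fin 4) (hk) (i : Fin 4) :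
    DAHA.cyc q k hk (DAHA.t q i) = DAHA.t q (i + k) :=
  DAHA.cyc_mk k hk (i, false)

end Aux

/-- There is an `F`-algebra automorphism of `Ĥ_q` sending `t₀ ↦ t₁ ↦ t₂ ↦ t₃ ↦ t₀`. -/
theorem stmt_6 (F : Type*) [Field F] (q : F) (hq0 : q ≠ 0) (hq4 : q ^ 4 ≠ 1) :
    ∃ f : DAHA F q ≃ₐ[F] DAHA F q,
      f (DAHA.t q 0) = DAHA.t q 1 ∧ f (DAHA.t q 1) = DAHA.t q 2 ∧
      f (DAHA.t q 2) = DAHA.t q 3 ∧ f (DAHA.t q 3) = DAHA.t q 0 := by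
  have hφk : DAHA.t q (0 + 1) * DAHA.t q (1 + 1) * DAHA.t q (2 + 1) * DAHA.t q (3 + 1)
      = algebraMap F (DAHA F q) q⁻¹ := by
    show DAHA.t q 1 * DAHA.t q 2 * DAHA.t q 3 * DAHA.t q 0 = _
    exact DAHA.prod_eq1
  have hψk : DAHA.t q (0 + 3) * DAHA.t q (1 + 3) * DAHA.t q (2 + 3) * DAHA.t q (3 + 3)
      = algebraMap F (DAHA F q) q⁻¹ := by
    show DAHA.t q 3 * DAHA.t q 0 * DAHA.t q 1 * DAHA.t q 2 = _
    exact DAHA.prod_eq3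
  set φ := DAHA.cyc q 1 hφk with hφ
  set ψ := DAHA.cyc q 3 hψk with hψ
  have key : ∀ (f g : DAHA F q →ₐ[F] DAHA F q),
      (∀ p : Fin 4 × Bool,
        f (RingQuot.mkAlgHom F (DAHARel F q) (ι F p))
          = g (RingQuot.mkAlgHom F (DAHARel F q) (ι F p))) → f = g := by
    intro f g h
    refine RingQuot.ringQuot_ext' F _ _ (FreeAlgebra.hom_ext (funext fun p => ?_))
    simpa using h p
  have h1 : φ.comp ψ = AlgHom.id F (DAHA F q) := by
    refine key _ _ fun p => ?_
    show φ (ψ (RingQuot.mkAlgHom F (DAHARel F q) (ι F p))) = _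
    rw [hψ, hφ, DAHA.cyc_mk, DAHA.cyc_mk]
    have : p.1 + 3 + 1 = p.1 := by omega
    simp [this]
  have h2 : ψ.comp φ = AlgHom.id F (DAHA F q) := by
    refine key _ _ fun p => ?_
    show ψ (φ (RingQuot.mkAlgHom F (DAHARel F q) (ι F p))) = _
    rw [hφ, hψ, DAHA.cyc_mk, DAHA.cyc_mk]
    have : p.1 + 1 + 3 = p.1 := by omega
    simp [this]
  refine ⟨AlgEquiv.ofAlgHom φ ψ h1 h2, ?_, ?_, ?_, ?_⟩
  · show φ (DAHA.t q 0) = _; rw [hφ, DAHA.cyc_t]; norm_num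
  · show φ (DAHA.t q 1) = _; rw [hφ, DAHA.cyc_t, show (1 + 1 : Fin 4) = 2 by decide]
  · show φ (DAHA.t q 2) = _; rw [hφ, DAHA.cyc_t, show (2 + 1 : Fin 4) = 3 by decide]
  · show φ (DAHA.t q 3) = _; rw [hφ, DAHA.cyc_t, show (3 + 1 : Fin 4) = 0 by decide]
end
end

section
/- Let Ĥ_q be the universal DAHA of type (C₁∨, C₁) over a field F with q ≠ 0, q⁴ ≠ 1. Then there exists an F-algebra isomorphism ξ : Ĥ_q → Ĥ_{q⁻¹} sending t₀ ↦ t₀⁻¹, t₁ ↦ t₃⁻¹, t₂ ↦ t₂⁻¹, t₃ ↦ t₁⁻¹. -/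
noncomputable section

open FreeAlgebra

namespace DAHAaux

variable {F : Type*} [Field F] (r : F)

lemma t_mul_tInv (i : Fin 4) : DAHA.t r i * DAHA.tInv r i = 1 := by
  have := RingQuot.mkAlgHom_rel F (DAHARel.invRight (F := F) (q := r) i)
  simpa [DAHA.t, DAHA.tInv, map_mul] using this

lemma tInv_mul_t (i : Fin 4) : DAHA.tInv r i * DAHA.t r i = 1 := by
  have := RingQuot.mkAlgHom_rel F (DAHARel.invLeft (F := F) (q := r) i)
  simpa [DAHA.t, DAHA.tInv, map_mul] using this

lemma t_tInv_cancel (i : Fin 4) (x : DAHA F r) : DAHA.t r i * (DAHA.tInv r i * x) = x := by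
  rw [← mul_assoc, t_mul_tInv, one_mul]

lemma tInv_t_cancel (i : Fin 4) (x : DAHA F r) : DAHA.tInv r i * (DAHA.t r i * x) = x := by
  rw [← mul_assoc, tInv_mul_t, one_mul]

lemma prod_t :
    DAHA.t r 0 * (DAHA.t r 1 * (DAHA.t r 2 * DAHA.t r 3)) = algebraMap F (DAHA F r) r⁻¹ := by
  have := RingQuot.mkAlgHom_rel F (DAHARel.prodRel (F := F) (q := r))
  simpa [DAHA.t, map_mul, mul_assoc, AlgHom.commutes] using this

lemma central (i : Fin 4) (g : Fin 4 × Bool) :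
    (DAHA.t r i + DAHA.tInv r i) * RingQuot.mkAlgHom F (DAHARel F r) (ι F g)
      = RingQuot.mkAlgHom F (DAHARel F r) (ι F g) * (DAHA.t r i + DAHA.tInv r i) := by
  have := RingQuot.mkAlgHom_rel F (DAHARel.central (F := F) (q := r) i g)
  simpa [DAHA.t, DAHA.tInv, map_mul, map_add] using this

lemma prod_tInv (hr : r ≠ 0) :
    DAHA.tInv r 0 * (DAHA.tInv r 3 * (DAHA.tInv r 2 * DAHA.tInv r 1))
      = algebraMap F (DAHA F r) r := by
  have h1 : DAHA.tInv r 3 * (DAHA.tInv r 2 * (DAHA.tInv r 1 * (DAHA.tInv r 0 *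
      (DAHA.t r 0 * (DAHA.t r 1 * (DAHA.t r 2 * DAHA.t r 3)))))) = 1 := by
    simp [tInv_t_cancel, tInv_mul_t]
  rw [prod_t] at h1
  have h2 : (DAHA.tInv r 3 * (DAHA.tInv r 2 * (DAHA.tInv r 1 * DAHA.tInv r 0)))
      * algebraMap F (DAHA F r) r⁻¹ = 1 := by
    rw [← h1]; simp [mul_assoc]
  have h3 : DAHA.tInv r 3 * (DAHA.tInv r 2 * (DAHA.tInv r 1 * DAHA.tInv r 0))
      = algebraMap F (DAHA F r) r := by
    have := congrArg (· * algebraMap F (DAHA F r) r) h2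
    simpa [mul_assoc, ← map_mul, inv_mul_cancel₀ hr] using this
  calc DAHA.tInv r 0 * (DAHA.tInv r 3 * (DAHA.tInv r 2 * DAHA.tInv r 1))
      = DAHA.tInv r 0 * (DAHA.tInv r 3 * (DAHA.tInv r 2 * (DAHA.tInv r 1 *
          (DAHA.tInv r 0 * DAHA.t r 0)))) := by rw [tInv_mul_t, mul_one]
    _ = DAHA.tInv r 0 * ((DAHA.tInv r 3 * (DAHA.tInv r 2 * (DAHA.tInv r 1 * DAHA.tInv r 0)))
          * DAHA.t r 0) := by simp [mul_assoc]
    _ = DAHA.tInv r 0 * (algebraMap F (DAHA F r) r * DAHA.t r 0) := by rw [h3]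
    _ = algebraMap F (DAHA F r) r * (DAHA.tInv r 0 * DAHA.t r 0) := by
          rw [← mul_assoc, ← Algebra.commutes, mul_assoc]
    _ = algebraMap F (DAHA F r) r := by rw [tInv_mul_t, mul_one]


/-- The involution on generators. -/
def perm : Fin 4 × Bool → Fin 4 × Bool := fun g => (![0, 3, 2, 1] g.1, !g.2)

lemma perm_perm (g : Fin 4 × Bool) : perm (perm g) = g := by
  rcases g with ⟨i, b⟩
  fin_cases i <;> cases b <;> rfl

variable {F : Type*} [Field F]

/-- The homomorphism `Ĥ_p → Ĥ_s` on the free algebra level. -/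
def xiFree (p s : F) : FreeAlgebra F (Fin 4 × Bool) →ₐ[F] DAHA F s :=
  FreeAlgebra.lift F (fun g => RingQuot.mkAlgHom F (DAHARel F s) (ι F (perm g)))

lemma xiFree_rel (p s : F) (h : p * s = 1) :
    ∀ ⦃x y⦄, DAHARel F p x y → xiFree p s x = xiFree p s y := by
  have hs : s ≠ 0 := by rintro rfl; simp at h
  have hps : p⁻¹ = s := inv_eq_of_mul_eq_one_right h
  intro x y hxy
  induction hxy with
  | invRight i =>
      simpa [xiFree, perm, DAHA.t, DAHA.tInv] using tInv_mul_t s (![0, 3, 2, 1] i)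
  | invLeft i =>
      simpa [xiFree, perm, DAHA.t, DAHA.tInv] using t_mul_tInv s (![0, 3, 2, 1] i)
  | central i g =>
      have := central s (![0, 3, 2, 1] i) (perm g)
      rw [add_comm] at this
      simpa [xiFree, perm, DAHA.t, DAHA.tInv] using this
  | prodRel =>
      have := prod_tInv s hs
      simp only [DAHA.tInv] at this
      rw [hps]
      simp only [xiFree, map_mul, FreeAlgebra.lift_ι_apply, AlgHom.commutes]
      simpa [perm, mul_assoc] using this

/-- The homomorphism `Ĥ_p → Ĥ_s` where `s = p⁻¹`. -/
def xiHom (p s : F) (h : p * s = 1) : DAHA F p →ₐ[F] DAHA F s :=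
  RingQuot.liftAlgHom F ⟨xiFree p s, xiFree_rel p s h⟩

lemma xiHom_apply (p s : F) (h : p * s = 1) (g : Fin 4 × Bool) :
    xiHom p s h (RingQuot.mkAlgHom F (DAHARel F p) (ι F g))
      = RingQuot.mkAlgHom F (DAHARel F s) (ι F (perm g)) := by
  simp [xiHom, RingQuot.liftAlgHom_mkAlgHom_apply, xiFree]

lemma xiHom_comp (p s : F) (h : p * s = 1) (h' : s * p = 1) :
    (xiHom s p h').comp (xiHom p s h) = AlgHom.id F (DAHA F p) := by
  apply RingQuot.ringQuot_ext'
  apply FreeAlgebra.hom_ext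
  funext g
  simp [xiHom_apply, perm_perm]

end DAHAaux


/-- There is an `F`-algebra isomorphism `ξ : Ĥ_q → Ĥ_{q⁻¹}` sending
`t₀ ↦ t₀⁻¹`, `t₁ ↦ t₃⁻¹`, `t₂ ↦ t₂⁻¹`, `t₃ ↦ t₁⁻¹`. -/
theorem stmt_8 (F : Type*) [Field F] (q : F) (hq0 : q ≠ 0) (hq4 : q ^ 4 ≠ 1) :
    ∃ ξ : DAHA F q ≃ₐ[F] DAHA F q⁻¹,
      ξ (DAHA.t q 0) = DAHA.tInv q⁻¹ 0 ∧ ξ (DAHA.t q 1) = DAHA.tInv q⁻¹ 3 ∧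
      ξ (DAHA.t q 2) = DAHA.tInv q⁻¹ 2 ∧ ξ (DAHA.t q 3) = DAHA.tInv q⁻¹ 1 := by
  have h1 : q * q⁻¹ = 1 := mul_inv_cancel₀ hq0
  have h2 : q⁻¹ * q = 1 := inv_mul_cancel₀ hq0
  refine ⟨AlgEquiv.ofAlgHom (DAHAaux.xiHom q q⁻¹ h1) (DAHAaux.xiHom q⁻¹ q h2)
    (DAHAaux.xiHom_comp q⁻¹ q h2 h1) (DAHAaux.xiHom_comp q q⁻¹ h1 h2), ?_, ?_, ?_, ?_⟩ <;>
    simp [AlgEquiv.ofAlgHom_apply, DAHA.t, DAHA.tInv, DAHAaux.xiHom_apply, DAHAaux.perm]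
end
end

section
/- There exists an F-algebra antiautomorphism † of the universal Askey–Wilson algebra Δ_q sending A ↦ B, B ↦ A, C ↦ C, and satisfying †² = id; moreover † sends α ↦ β, β ↦ α, γ ↦ γ, where α, β, γ are (q + q⁻¹) times the three central elements of the defining relations. -/
noncomputable section

open FreeAlgebra

/-- `awδ q x y z = x + (q x y - q⁻¹ z y)/(q² - q⁻²)`, the generic expression required to be
central in the universal Askey–Wilson algebra. -/
def awδ {F : Type*} [Field F] (q : F) (x y z : FreeAlgebra F (Fin 3)) :
    FreeAlgebra F (Fin 3) :=
  x + (q ^ 2 - q⁻¹ ^ 2)⁻¹ • (q • (y * z) - q⁻¹ • (z * y))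

/-- Defining relations of the universal Askey–Wilson algebra: each of the three
elements `awδ` built from the generators `A, B, C` commutes with every generator. -/
inductive AWRel (F : Type*) [Field F] (q : F) :
    FreeAlgebra F (Fin 3) → FreeAlgebra F (Fin 3) → Prop
  | centralA (g : Fin 3) :
      AWRel F q (awδ q (ι F 0) (ι F 1) (ι F 2) * ι F g)
        (ι F g * awδ q (ι F 0) (ι F 1) (ι F 2))
  | centralB (g : Fin 3) :
      AWRel F q (awδ q (ι F 1) (ι F 2) (ι F 0) * ι F g)
        (ι F g * awδ q (ι F 1) (ι F 2) (ι F 0))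
  | centralC (g : Fin 3) :
      AWRel F q (awδ q (ι F 2) (ι F 0) (ι F 1) * ι F g)
        (ι F g * awδ q (ι F 2) (ι F 0) (ι F 1))

/-- The universal Askey–Wilson algebra `Δ_q`. -/
abbrev AW (F : Type*) [Field F] (q : F) := RingQuot (AWRel F q)

/-- The generator `A` of `Δ_q`. -/
def AW.A {F : Type*} [Field F] (q : F) : AW F q := RingQuot.mkAlgHom F (AWRel F q) (ι F 0)

/-- The generator `B` of `Δ_q`. -/
def AW.B {F : Type*} [Field F] (q : F) : AW F q := RingQuot.mkAlgHom F (AWRel F q) (ι F 1)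

/-- The generator `C` of `Δ_q`. -/
def AW.C {F : Type*} [Field F] (q : F) : AW F q := RingQuot.mkAlgHom F (AWRel F q) (ι F 2)

/-- The central element `α = (q + q⁻¹)(A + (qBC - q⁻¹CB)/(q² - q⁻²))` of `Δ_q`. -/
def AW.alpha {F : Type*} [Field F] (q : F) : AW F q :=
  (q + q⁻¹) • (AW.A q +
    (q ^ 2 - q⁻¹ ^ 2)⁻¹ • (q • (AW.B q * AW.C q) - q⁻¹ • (AW.C q * AW.B q)))

/-- The central element `β = (q + q⁻¹)(B + (qCA - q⁻¹AC)/(q² - q⁻²))` of `Δ_q`. -/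
def AW.beta {F : Type*} [Field F] (q : F) : AW F q :=
  (q + q⁻¹) • (AW.B q +
    (q ^ 2 - q⁻¹ ^ 2)⁻¹ • (q • (AW.C q * AW.A q) - q⁻¹ • (AW.A q * AW.C q)))

/-- The central element `γ = (q + q⁻¹)(C + (qAB - q⁻¹BA)/(q² - q⁻²))` of `Δ_q`. -/
def AW.gamma {F : Type*} [Field F] (q : F) : AW F q :=
  (q + q⁻¹) • (AW.C q +
    (q ^ 2 - q⁻¹ ^ 2)⁻¹ • (q • (AW.A q * AW.B q) - q⁻¹ • (AW.B q * AW.A q)))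

open MulOpposite

section Aux
variable {F : Type*} [Field F] (q : F)

/-- The anti-homomorphism candidate on the free algebra. -/
def awPhi : FreeAlgebra F (Fin 3) →ₐ[F] (AW F q)ᵐᵒᵖ :=
  FreeAlgebra.lift F ![op (AW.B q), op (AW.A q), op (AW.C q)]

lemma awPhi_apply0 : awPhi q (ι F 0) = op (AW.B q) := by
  simp [awPhi]
lemma awPhi_apply1 : awPhi q (ι F 1) = op (AW.A q) := by
  simp [awPhi]
lemma awPhi_apply2 : awPhi q (ι F 2) = op (AW.C q) := by
  simp [awPhi]

lemma awPhi_ι (g : Fin 3) :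
    awPhi q (ι F g) = op (RingQuot.mkAlgHom F (AWRel F q) (ι F (Equiv.swap 0 1 g))) := by
  fin_cases g
  · simpa [AW.B] using awPhi_apply0 q
  · simpa [AW.A] using awPhi_apply1 q
  · simpa [AW.C, Equiv.swap_apply_of_ne_of_ne (by decide : (2 : Fin 3) ≠ 0) (by decide : (2 : Fin 3) ≠ 1)] using awPhi_apply2 q

lemma awPhi_delta0 :
    awPhi q (awδ q (ι F 0) (ι F 1) (ι F 2))
      = op (RingQuot.mkAlgHom F (AWRel F q) (awδ q (ι F 1) (ι F 2) (ι F 0))) := by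
  simp [awδ, map_add, map_mul, map_sub, map_smul, awPhi_apply0, awPhi_apply1, awPhi_apply2,
    AW.A, AW.B, AW.C]

lemma awPhi_delta1 :
    awPhi q (awδ q (ι F 1) (ι F 2) (ι F 0))
      = op (RingQuot.mkAlgHom F (AWRel F q) (awδ q (ι F 0) (ι F 1) (ι F 2))) := by
  simp [awδ, map_add, map_mul, map_sub, map_smul, awPhi_apply0, awPhi_apply1, awPhi_apply2,
    AW.A, AW.B, AW.C]

lemma awPhi_delta2 :
    awPhi q (awδ q (ι F 2) (ι F 0) (ι F 1))
      = op (RingQuot.mkAlgHom F (AWRel F q) (awδ q (ι F 2) (ι F 0) (ι F 1))) := by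
  simp [awδ, map_add, map_mul, map_sub, map_smul, awPhi_apply0, awPhi_apply1, awPhi_apply2,
    AW.A, AW.B, AW.C]

lemma awPhi_rel : ∀ ⦃x y⦄, AWRel F q x y → awPhi q x = awPhi q y := by
  intro x y h
  induction h with
  | centralA g =>
      simp only [map_mul, awPhi_delta0, awPhi_ι, ← op_mul]
      congr 1
      rw [← map_mul, ← map_mul]
      exact (RingQuot.mkAlgHom_rel F (AWRel.centralB (Equiv.swap 0 1 g))).symm
  | centralB g =>
      simp only [map_mul, awPhi_delta1, awPhi_ι, ← op_mul]
      congr 1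
      rw [← map_mul, ← map_mul]
      exact (RingQuot.mkAlgHom_rel F (AWRel.centralA (Equiv.swap 0 1 g))).symm
  | centralC g =>
      simp only [map_mul, awPhi_delta2, awPhi_ι, ← op_mul]
      congr 1
      rw [← map_mul, ← map_mul]
      exact (RingQuot.mkAlgHom_rel F (AWRel.centralC (Equiv.swap 0 1 g))).symm

end Aux

section Aux2
variable {F : Type*} [Field F] (q : F)

/-- The lifted anti-homomorphism on `Δ_q`. -/
def awDag : AW F q →ₐ[F] (AW F q)ᵐᵒᵖ :=
  RingQuot.liftAlgHom F ⟨awPhi q, awPhi_rel q⟩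

/-- `†` as a linear map. -/
def awDagLin : AW F q →ₗ[F] AW F q :=
  (opLinearEquiv F).symm.toLinearMap ∘ₗ (awDag q).toLinearMap

lemma awDagLin_apply (x : AW F q) : awDagLin q x = unop (awDag q x) := rfl

lemma awDagLin_mul (u v : AW F q) : awDagLin q (u * v) = awDagLin q v * awDagLin q u := by
  simp [awDagLin_apply, map_mul]

lemma awDagLin_A : awDagLin q (AW.A q) = AW.B q := by
  simp [awDagLin_apply, awDag, AW.A, RingQuot.liftAlgHom_mkAlgHom_apply, awPhi_apply0]

lemma awDagLin_B : awDagLin q (AW.B q) = AW.A q := by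
  simp [awDagLin_apply, awDag, AW.B, RingQuot.liftAlgHom_mkAlgHom_apply, awPhi_apply1]

lemma awDagLin_C : awDagLin q (AW.C q) = AW.C q := by
  simp [awDagLin_apply, awDag, AW.C, RingQuot.liftAlgHom_mkAlgHom_apply, awPhi_apply2]

lemma awDagLin_invol (x : AW F q) : awDagLin q (awDagLin q x) = x := by
  obtain ⟨y, rfl⟩ := RingQuot.mkAlgHom_surjective F (AWRel F q) x
  induction y with
  | grade0 r =>
      rw [AlgHom.commutes]
      have h1 : awDagLin q (1 : AW F q) = 1 := by
        simp [awDagLin_apply, map_one]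
      have : (algebraMap F (AW F q)) r = r • (1 : AW F q) := by
        rw [Algebra.smul_def, mul_one]
      rw [this, map_smul, h1, map_smul, h1]
  | grade1 i =>
      fin_cases i
      · show awDagLin q (awDagLin q (AW.A q)) = AW.A q
        rw [awDagLin_A, awDagLin_B]
      · show awDagLin q (awDagLin q (AW.B q)) = AW.B q
        rw [awDagLin_B, awDagLin_A]
      · show awDagLin q (awDagLin q (AW.C q)) = AW.C q
        rw [awDagLin_C, awDagLin_C]
  | mul a b ha hb =>
      rw [map_mul, awDagLin_mul, awDagLin_mul, ha, hb]
  | add a b ha hb =>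
      rw [map_add, map_add, map_add, ha, hb]

end Aux2

/-- There is an antiautomorphism `†` of `Δ_q` sending `A ↦ B`, `B ↦ A`, `C ↦ C`,
with `†² = id`, and moreover `α ↦ β`, `β ↦ α`, `γ ↦ γ`. -/
theorem stmt_15 (F : Type*) [Field F] (q : F) (hq0 : q ≠ 0) (hq4 : q ^ 4 ≠ 1) :
    ∃ ζ : AW F q ≃ₗ[F] AW F q,
      (∀ u v : AW F q, ζ (u * v) = ζ v * ζ u) ∧
      ζ (AW.A q) = AW.B q ∧ ζ (AW.B q) = AW.A q ∧ ζ (AW.C q) = AW.C q ∧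
      (∀ x : AW F q, ζ (ζ x) = x) ∧
      ζ (AW.alpha q) = AW.beta q ∧ ζ (AW.beta q) = AW.alpha q ∧
      ζ (AW.gamma q) = AW.gamma q := by
  let ζ : AW F q ≃ₗ[F] AW F q :=
    { toLinearMap := awDagLin q, invFun := awDagLin q,
      left_inv := awDagLin_invol q, right_inv := awDagLin_invol q }
  have hζ : ∀ x, ζ x = awDagLin q x := fun _ => rfl
  refine ⟨ζ, fun u v => by rw [hζ, hζ, hζ]; exact awDagLin_mul q u v, ?_, ?_, ?_,
      fun x => by rw [hζ, hζ]; exact awDagLin_invol q x, ?_, ?_, ?_⟩ <;>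
  simp only [hζ, AW.alpha, AW.beta, AW.gamma, map_smul, map_add, map_sub,
    awDagLin_mul, awDagLin_A, awDagLin_B, awDagLin_C]
end
end

section
/- Let Ĥ_q be the universal DAHA of type (C₁∨, C₁) and set A = t₁t₀ + (t₁t₀)⁻¹, B = t₃t₀ + (t₃t₀)⁻¹, C = t₂t₀ + (t₂t₀)⁻¹. Then t₀ commutes with each of A, B, and C in Ĥ_q. -/
noncomputable section

open FreeAlgebra

lemma DAHA.comm_aux {F : Type*} [Field F] (q : F) (i : Fin 4) :
    DAHA.t q 0 * (DAHA.t q i * DAHA.t q 0 + DAHA.tInv q 0 * DAHA.tInv q i) =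
      (DAHA.t q i * DAHA.t q 0 + DAHA.tInv q 0 * DAHA.tInv q i) * DAHA.t q 0 := by
  set a := DAHA.t q 0 with ha
  set a' := DAHA.tInv q 0 with ha'
  set b := DAHA.t q i with hb
  set b' := DAHA.tInv q i with hb'
  have h1 : a * a' = 1 := by
    have := RingQuot.mkAlgHom_rel F (DAHARel.invRight (F := F) (q := q) 0)
    simpa [ha, ha', DAHA.t, DAHA.tInv, map_mul, map_one] using this
  have h2 : a' * a = 1 := by
    have := RingQuot.mkAlgHom_rel F (DAHARel.invLeft (F := F) (q := q) 0)
    simpa [ha, ha', DAHA.t, DAHA.tInv, map_mul, map_one] using this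
  have h3 : (b + b') * a = a * (b + b') := by
    have := RingQuot.mkAlgHom_rel F (DAHARel.central (F := F) (q := q) i (0, false))
    simpa [ha, hb, hb', DAHA.t, DAHA.tInv, map_mul, map_add] using this
  have h4 : (a + a') * b' = b' * (a + a') := by
    have := RingQuot.mkAlgHom_rel F (DAHARel.central (F := F) (q := q) 0 (i, true))
    simpa [ha, ha', hb', DAHA.t, DAHA.tInv, map_mul, map_add] using this
  linear_combination (norm := noncomm_ring) h3.symm * a + h4.symm * a + h1 * b' - b' * h2


/-- `t₀` commutes with each of `A = t₁t₀ + (t₁t₀)⁻¹`, `B = t₃t₀ + (t₃t₀)⁻¹`,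
`C = t₂t₀ + (t₂t₀)⁻¹` in `Ĥ_q`. -/
theorem stmt_17 (F : Type*) [Field F] (q : F) (hq0 : q ≠ 0) (hq4 : q ^ 4 ≠ 1) :
    DAHA.t q 0 * (DAHA.t q 1 * DAHA.t q 0 + DAHA.tInv q 0 * DAHA.tInv q 1) =
        (DAHA.t q 1 * DAHA.t q 0 + DAHA.tInv q 0 * DAHA.tInv q 1) * DAHA.t q 0 ∧
    DAHA.t q 0 * (DAHA.t q 3 * DAHA.t q 0 + DAHA.tInv q 0 * DAHA.tInv q 3) =
        (DAHA.t q 3 * DAHA.t q 0 + DAHA.tInv q 0 * DAHA.tInv q 3) * DAHA.t q 0 ∧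
    DAHA.t q 0 * (DAHA.t q 2 * DAHA.t q 0 + DAHA.tInv q 0 * DAHA.tInv q 2) =
        (DAHA.t q 2 * DAHA.t q 0 + DAHA.tInv q 0 * DAHA.tInv q 2) * DAHA.t q 0 :=
  ⟨DAHA.comm_aux q 1, DAHA.comm_aux q 3, DAHA.comm_aux q 2⟩
end
end

section
/- The Artin braid group B₃ (with generators ρ, σ and relation ρ³ = σ²) acts on the universal Askey–Wilson algebra Δ_q by F-algebra automorphisms, where ρ sends (A, B, C) ↦ (B, C, A) and σ sends A ↦ B, B ↦ A, C ↦ C + (AB − BA)/(q − q⁻¹), and the central element τ = ρ³ = σ² acts as the identity. In particular, there exist algebra automorphisms ρ, σ of Δ_q with these values on generators satisfying ρ³ = σ² = id. -/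
noncomputable section

open FreeAlgebra

namespace AWAux

variable {F : Type*} [Field F] (q : F)

lemma hq_sub {q : F} (hq0 : q ≠ 0) (hq4 : q ^ 4 ≠ 1) : q - q⁻¹ ≠ 0 := by
  intro h
  rw [sub_eq_zero] at h
  apply hq4
  have h2 : q ^ 2 = 1 := by rw [pow_two]; nth_rewrite 2 [h]; exact mul_inv_cancel₀ hq0
  calc q ^ 4 = (q ^ 2) ^ 2 := by ring
  _ = 1 := by rw [h2]; ring

lemma hq_add {q : F} (hq0 : q ≠ 0) (hq4 : q ^ 4 ≠ 1) : q + q⁻¹ ≠ 0 := by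
  intro h
  rw [add_eq_zero_iff_eq_neg] at h
  apply hq4
  have h2 : q ^ 2 = -1 := by
    rw [pow_two]; nth_rewrite 2 [h]; rw [mul_neg, mul_inv_cancel₀ hq0]
  calc q ^ 4 = (q ^ 2) ^ 2 := by ring
  _ = 1 := by rw [h2]; ring

lemma hq_sq {q : F} (hq0 : q ≠ 0) (hq4 : q ^ 4 ≠ 1) : q ^ 2 - q⁻¹ ^ 2 ≠ 0 := by
  have : q ^ 2 - q⁻¹ ^ 2 = (q - q⁻¹) * (q + q⁻¹) := by ring
  rw [this]
  exact mul_ne_zero (hq_sub hq0 hq4) (hq_add hq0 hq4)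


lemma hq_two {q : F} (hq4 : q ^ 4 ≠ 1) : q ^ 2 - 1 ≠ 0 := by
  intro h
  rw [sub_eq_zero] at h
  exact hq4 (by calc q ^ 4 = (q ^ 2) ^ 2 := by ring
                _ = 1 := by rw [h]; ring)

lemma hq_four {q : F} (hq4 : q ^ 4 ≠ 1) : q ^ 4 - 1 ≠ 0 := sub_ne_zero.mpr hq4

lemma inv_sq_eq {q : F} (hq0 : q ≠ 0) : (q ^ 2 - q⁻¹ ^ 2)⁻¹ = q ^ 2 / (q ^ 4 - 1) := by
  rw [show q ^ 2 - q⁻¹ ^ 2 = (q ^ 4 - 1) / q ^ 2 by field_simp, inv_div]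

lemma inv_sub_eq {q : F} (hq0 : q ≠ 0) : (q - q⁻¹)⁻¹ = q / (q ^ 2 - 1) := by
  rw [show q - q⁻¹ = (q ^ 2 - 1) / q by field_simp, inv_div]

def dA : AW F q := RingQuot.mkAlgHom F (AWRel F q) (awδ q (ι F 0) (ι F 1) (ι F 2))
def dB : AW F q := RingQuot.mkAlgHom F (AWRel F q) (awδ q (ι F 1) (ι F 2) (ι F 0))
def dC : AW F q := RingQuot.mkAlgHom F (AWRel F q) (awδ q (ι F 2) (ι F 0) (ι F 1))

lemma dA_eq : dA q = AW.A q +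
    (q ^ 2 - q⁻¹ ^ 2)⁻¹ • (q • (AW.B q * AW.C q) - q⁻¹ • (AW.C q * AW.B q)) := by
  simp [dA, awδ, AW.A, AW.B, AW.C, map_add, map_smul, map_sub, map_mul]

lemma dB_eq : dB q = AW.B q +
    (q ^ 2 - q⁻¹ ^ 2)⁻¹ • (q • (AW.C q * AW.A q) - q⁻¹ • (AW.A q * AW.C q)) := by
  simp [dB, awδ, AW.A, AW.B, AW.C, map_add, map_smul, map_sub, map_mul]

lemma dC_eq : dC q = AW.C q +
    (q ^ 2 - q⁻¹ ^ 2)⁻¹ • (q • (AW.A q * AW.B q) - q⁻¹ • (AW.B q * AW.A q)) := by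
  simp [dC, awδ, AW.A, AW.B, AW.C, map_add, map_smul, map_sub, map_mul]

lemma dA_comm (g : Fin 3) :
    dA q * RingQuot.mkAlgHom F (AWRel F q) (ι F g)
      = RingQuot.mkAlgHom F (AWRel F q) (ι F g) * dA q := by
  simpa only [map_mul, dA] using RingQuot.mkAlgHom_rel F (AWRel.centralA g)

lemma dB_comm (g : Fin 3) :
    dB q * RingQuot.mkAlgHom F (AWRel F q) (ι F g)
      = RingQuot.mkAlgHom F (AWRel F q) (ι F g) * dB q := by
  simpa only [map_mul, dB] using RingQuot.mkAlgHom_rel F (AWRel.centralB g)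

lemma dC_comm (g : Fin 3) :
    dC q * RingQuot.mkAlgHom F (AWRel F q) (ι F g)
      = RingQuot.mkAlgHom F (AWRel F q) (ι F g) * dC q := by
  simpa only [map_mul, dC] using RingQuot.mkAlgHom_rel F (AWRel.centralC g)

/-- the image of `C` under σ -/
def sC : AW F q := AW.C q + (q - q⁻¹)⁻¹ • (AW.A q * AW.B q - AW.B q * AW.A q)

lemma sigma_d1 (hq0 : q ≠ 0) (hq4 : q ^ 4 ≠ 1) :
    AW.B q + (q ^ 2 - q⁻¹ ^ 2)⁻¹ • (q • (AW.A q * sC q) - q⁻¹ • (sC q * AW.A q)) = dB q := by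
  have h := dC_comm q 0
  rw [show RingQuot.mkAlgHom F (AWRel F q) (ι F 0) = AW.A q from rfl] at h
  have key : AW.B q + (q ^ 2 - q⁻¹ ^ 2)⁻¹ • (q • (AW.A q * sC q) - q⁻¹ • (sC q * AW.A q))
      - dB q = (q - q⁻¹)⁻¹ • (AW.A q * dC q - dC q * AW.A q) := by
    rw [dB_eq, dC_eq, sC]
    simp only [mul_add, add_mul, mul_sub, sub_mul, smul_mul_assoc, mul_smul_comm, smul_add,
      smul_sub, smul_smul, mul_assoc]
    match_scalars
    all_goals try simp only [inv_sq_eq hq0, inv_sub_eq hq0]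
    all_goals try field_simp [hq_two hq4, hq_four hq4]
    all_goals ring
  have h0 : AW.A q * dC q - dC q * AW.A q = 0 := by rw [h, sub_self]
  rw [h0, smul_zero] at key
  exact sub_eq_zero.mp key

lemma sigma_d2 (hq0 : q ≠ 0) (hq4 : q ^ 4 ≠ 1) :
    AW.A q + (q ^ 2 - q⁻¹ ^ 2)⁻¹ • (q • (sC q * AW.B q) - q⁻¹ • (AW.B q * sC q)) = dA q := by
  have h := dC_comm q 1
  rw [show RingQuot.mkAlgHom F (AWRel F q) (ι F 1) = AW.B q from rfl] at h
  have key : AW.A q + (q ^ 2 - q⁻¹ ^ 2)⁻¹ • (q • (sC q * AW.B q) - q⁻¹ • (AW.B q * sC q))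
      - dA q = (q - q⁻¹)⁻¹ • (dC q * AW.B q - AW.B q * dC q) := by
    rw [dA_eq, dC_eq, sC]
    simp only [mul_add, add_mul, mul_sub, sub_mul, smul_mul_assoc, mul_smul_comm, smul_add,
      smul_sub, smul_smul, mul_assoc]
    match_scalars
    all_goals try simp only [inv_sq_eq hq0, inv_sub_eq hq0]
    all_goals try field_simp [hq_two hq4, hq_four hq4]
    all_goals ring
  have h0 : dC q * AW.B q - AW.B q * dC q = 0 := by rw [h, sub_self]
  rw [h0, smul_zero] at key
  exact sub_eq_zero.mp key

lemma sigma_d3 (hq0 : q ≠ 0) (hq4 : q ^ 4 ≠ 1) :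
    sC q + (q ^ 2 - q⁻¹ ^ 2)⁻¹ • (q • (AW.B q * AW.A q) - q⁻¹ • (AW.A q * AW.B q)) = dC q := by
  rw [dC_eq, sC]
  match_scalars
  all_goals try simp only [inv_sq_eq hq0, inv_sub_eq hq0]
  all_goals try field_simp [hq_two hq4, hq_four hq4]
  all_goals ring

/-- generator images under ρ -/
def ρfun : Fin 3 → AW F q := ![AW.B q, AW.C q, AW.A q]
/-- generator images under σ -/
def σfun : Fin 3 → AW F q := ![AW.B q, AW.A q, sC q]

lemma ρfun_0 : ρfun q 0 = AW.B q := rfl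
lemma ρfun_1 : ρfun q 1 = AW.C q := rfl
lemma ρfun_2 : ρfun q 2 = AW.A q := rfl
lemma σfun_0 : σfun q 0 = AW.B q := rfl
lemma σfun_1 : σfun q 1 = AW.A q := rfl
lemma σfun_2 : σfun q 2 = sC q := rfl

lemma comm_sC {d : AW F q}
    (h : ∀ g : Fin 3, d * RingQuot.mkAlgHom F (AWRel F q) (ι F g)
      = RingQuot.mkAlgHom F (AWRel F q) (ι F g) * d) :
    d * sC q = sC q * d := by
  have hA : Commute d (AW.A q) := h 0
  have hB : Commute d (AW.B q) := h 1
  have hC : Commute d (AW.C q) := h 2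
  exact hC.add_right ((((hA.mul_right hB).sub_right (hB.mul_right hA)).smul_right _))

lemma lift_ρ_d1 : FreeAlgebra.lift F (ρfun q) (awδ q (ι F 0) (ι F 1) (ι F 2)) = dB q := by
  rw [dB_eq]
  simp [awδ, map_add, map_smul, map_sub, map_mul, lift_ι_apply, ρfun_0, ρfun_1, ρfun_2]

lemma lift_ρ_d2 : FreeAlgebra.lift F (ρfun q) (awδ q (ι F 1) (ι F 2) (ι F 0)) = dC q := by
  rw [dC_eq]
  simp [awδ, map_add, map_smul, map_sub, map_mul, lift_ι_apply, ρfun_0, ρfun_1, ρfun_2]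

lemma lift_ρ_d3 : FreeAlgebra.lift F (ρfun q) (awδ q (ι F 2) (ι F 0) (ι F 1)) = dA q := by
  rw [dA_eq]
  simp [awδ, map_add, map_smul, map_sub, map_mul, lift_ι_apply, ρfun_0, ρfun_1, ρfun_2]

lemma lift_σ_d1 (hq0 : q ≠ 0) (hq4 : q ^ 4 ≠ 1) :
    FreeAlgebra.lift F (σfun q) (awδ q (ι F 0) (ι F 1) (ι F 2)) = dB q := by
  rw [← sigma_d1 q hq0 hq4]
  simp [awδ, map_add, map_smul, map_sub, map_mul, lift_ι_apply, σfun_0, σfun_1, σfun_2]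

lemma lift_σ_d2 (hq0 : q ≠ 0) (hq4 : q ^ 4 ≠ 1) :
    FreeAlgebra.lift F (σfun q) (awδ q (ι F 1) (ι F 2) (ι F 0)) = dA q := by
  rw [← sigma_d2 q hq0 hq4]
  simp [awδ, map_add, map_smul, map_sub, map_mul, lift_ι_apply, σfun_0, σfun_1, σfun_2]

lemma lift_σ_d3 (hq0 : q ≠ 0) (hq4 : q ^ 4 ≠ 1) :
    FreeAlgebra.lift F (σfun q) (awδ q (ι F 2) (ι F 0) (ι F 1)) = dC q := by
  rw [← sigma_d3 q hq0 hq4]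
  simp [awδ, map_add, map_smul, map_sub, map_mul, lift_ι_apply, σfun_0, σfun_1, σfun_2]

lemma ρ_rel ⦃x y : FreeAlgebra F (Fin 3)⦄ (r : AWRel F q x y) :
    FreeAlgebra.lift F (ρfun q) x = FreeAlgebra.lift F (ρfun q) y := by
  cases r with
  | centralA g =>
      simp only [map_mul, lift_ρ_d1, lift_ι_apply]
      fin_cases g
      · exact dB_comm q 1
      · exact dB_comm q 2
      · exact dB_comm q 0
  | centralB g =>
      simp only [map_mul, lift_ρ_d2, lift_ι_apply]
      fin_cases g
      · exact dC_comm q 1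
      · exact dC_comm q 2
      · exact dC_comm q 0
  | centralC g =>
      simp only [map_mul, lift_ρ_d3, lift_ι_apply]
      fin_cases g
      · exact dA_comm q 1
      · exact dA_comm q 2
      · exact dA_comm q 0

lemma σ_rel (hq0 : q ≠ 0) (hq4 : q ^ 4 ≠ 1) ⦃x y : FreeAlgebra F (Fin 3)⦄
    (r : AWRel F q x y) :
    FreeAlgebra.lift F (σfun q) x = FreeAlgebra.lift F (σfun q) y := by
  cases r with
  | centralA g =>
      simp only [map_mul, lift_σ_d1 q hq0 hq4, lift_ι_apply]
      fin_cases g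
      · exact dB_comm q 1
      · exact dB_comm q 0
      · exact comm_sC q (dB_comm q)
  | centralB g =>
      simp only [map_mul, lift_σ_d2 q hq0 hq4, lift_ι_apply]
      fin_cases g
      · exact dA_comm q 1
      · exact dA_comm q 0
      · exact comm_sC q (dA_comm q)
  | centralC g =>
      simp only [map_mul, lift_σ_d3 q hq0 hq4, lift_ι_apply]
      fin_cases g
      · exact dC_comm q 1
      · exact dC_comm q 0
      · exact comm_sC q (dC_comm q)

def ρhom : AW F q →ₐ[F] AW F q :=
  RingQuot.liftAlgHom F ⟨FreeAlgebra.lift F (ρfun q), ρ_rel q⟩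

def σhom (hq0 : q ≠ 0) (hq4 : q ^ 4 ≠ 1) : AW F q →ₐ[F] AW F q :=
  RingQuot.liftAlgHom F ⟨FreeAlgebra.lift F (σfun q), σ_rel q hq0 hq4⟩

lemma ρhom_gen (g : Fin 3) :
    ρhom q (RingQuot.mkAlgHom F (AWRel F q) (ι F g)) = ρfun q g := by
  rw [ρhom, RingQuot.liftAlgHom_mkAlgHom_apply, lift_ι_apply]

lemma σhom_gen (hq0 : q ≠ 0) (hq4 : q ^ 4 ≠ 1) (g : Fin 3) :
    σhom q hq0 hq4 (RingQuot.mkAlgHom F (AWRel F q) (ι F g)) = σfun q g := by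
  rw [σhom, RingQuot.liftAlgHom_mkAlgHom_apply, lift_ι_apply]

lemma algHom_fix (f : AW F q →ₐ[F] AW F q)
    (h : ∀ g : Fin 3, f (RingQuot.mkAlgHom F (AWRel F q) (ι F g))
      = RingQuot.mkAlgHom F (AWRel F q) (ι F g)) :
    ∀ x, f x = x := by
  have hcomp : f.comp (RingQuot.mkAlgHom F (AWRel F q)) = RingQuot.mkAlgHom F (AWRel F q) :=
    FreeAlgebra.hom_ext (funext fun g => h g)
  intro x
  obtain ⟨a, rfl⟩ := RingQuot.mkAlgHom_surjective F (AWRel F q) x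
  exact DFunLike.congr_fun hcomp a

lemma ρhom_A : ρhom q (AW.A q) = AW.B q := ρhom_gen q 0
lemma ρhom_B : ρhom q (AW.B q) = AW.C q := ρhom_gen q 1
lemma ρhom_C : ρhom q (AW.C q) = AW.A q := ρhom_gen q 2

lemma ρ3_fix : ∀ x, ρhom q (ρhom q (ρhom q x)) = x := by
  have h : ∀ g : Fin 3, ρhom q (ρhom q (ρhom q (RingQuot.mkAlgHom F (AWRel F q) (ι F g))))
      = RingQuot.mkAlgHom F (AWRel F q) (ι F g) := by
    intro g
    fin_cases g
    · show ρhom q (ρhom q (ρhom q (AW.A q))) = AW.A q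
      rw [ρhom_A, ρhom_B, ρhom_C]
    · show ρhom q (ρhom q (ρhom q (AW.B q))) = AW.B q
      rw [ρhom_B, ρhom_C, ρhom_A]
    · show ρhom q (ρhom q (ρhom q (AW.C q))) = AW.C q
      rw [ρhom_C, ρhom_A, ρhom_B]
  exact algHom_fix q ((ρhom q).comp ((ρhom q).comp (ρhom q)))
    (fun g => by simpa [AlgHom.comp_apply] using h g)

lemma σhom_A (hq0 : q ≠ 0) (hq4 : q ^ 4 ≠ 1) : σhom q hq0 hq4 (AW.A q) = AW.B q :=
  σhom_gen q hq0 hq4 0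

lemma σhom_B (hq0 : q ≠ 0) (hq4 : q ^ 4 ≠ 1) : σhom q hq0 hq4 (AW.B q) = AW.A q :=
  σhom_gen q hq0 hq4 1

lemma σhom_C (hq0 : q ≠ 0) (hq4 : q ^ 4 ≠ 1) : σhom q hq0 hq4 (AW.C q) = sC q :=
  σhom_gen q hq0 hq4 2

lemma σ2_fix (hq0 : q ≠ 0) (hq4 : q ^ 4 ≠ 1) :
    ∀ x, σhom q hq0 hq4 (σhom q hq0 hq4 x) = x := by
  have h : ∀ g : Fin 3, σhom q hq0 hq4 (σhom q hq0 hq4 (RingQuot.mkAlgHom F (AWRel F q) (ι F g)))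
      = RingQuot.mkAlgHom F (AWRel F q) (ι F g) := by
    intro g
    fin_cases g
    · show σhom q hq0 hq4 (σhom q hq0 hq4 (AW.A q)) = AW.A q
      rw [σhom_A q hq0 hq4, σhom_B q hq0 hq4]
    · show σhom q hq0 hq4 (σhom q hq0 hq4 (AW.B q)) = AW.B q
      rw [σhom_B q hq0 hq4, σhom_A q hq0 hq4]
    · show σhom q hq0 hq4 (σhom q hq0 hq4 (AW.C q)) = AW.C q
      rw [σhom_C q hq0 hq4, sC, map_add, map_smul, map_sub, map_mul, map_mul,
        σhom_A q hq0 hq4, σhom_B q hq0 hq4, σhom_C q hq0 hq4, sC]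
      module
  exact algHom_fix q ((σhom q hq0 hq4).comp (σhom q hq0 hq4))
    (fun g => by simpa [AlgHom.comp_apply] using h g)

end AWAux


/-- The braid group `B₃ = ⟨ρ, σ | ρ³ = σ²⟩` acts on `Δ_q` by algebra automorphisms,
with `ρ : (A,B,C) ↦ (B,C,A)`, `σ : A ↦ B, B ↦ A, C ↦ C + (AB - BA)/(q - q⁻¹)`, and
`τ = ρ³ = σ²` acting as the identity: there exist automorphisms `ρ, σ` of `Δ_q` with
these values on the generators satisfying `ρ³ = σ² = id`. -/
theorem stmt_18 (F : Type*) [Field F] (q : F) (hq0 : q ≠ 0) (hq4 : q ^ 4 ≠ 1) :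
    ∃ ρ σ : AW F q ≃ₐ[F] AW F q,
      ρ (AW.A q) = AW.B q ∧ ρ (AW.B q) = AW.C q ∧ ρ (AW.C q) = AW.A q ∧
      σ (AW.A q) = AW.B q ∧ σ (AW.B q) = AW.A q ∧
      σ (AW.C q) = AW.C q + (q - q⁻¹)⁻¹ • (AW.A q * AW.B q - AW.B q * AW.A q) ∧
      (∀ x : AW F q, ρ (ρ (ρ x)) = x) ∧ (∀ x : AW F q, σ (σ x) = x) := by
  
  classical
  refine ⟨AlgEquiv.ofAlgHom (AWAux.ρhom q) ((AWAux.ρhom q).comp (AWAux.ρhom q))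
      (AlgHom.ext fun x => AWAux.ρ3_fix q x) (AlgHom.ext fun x => AWAux.ρ3_fix q x),
    AlgEquiv.ofAlgHom (AWAux.σhom q hq0 hq4) (AWAux.σhom q hq0 hq4)
      (AlgHom.ext fun x => AWAux.σ2_fix q hq0 hq4 x)
      (AlgHom.ext fun x => AWAux.σ2_fix q hq0 hq4 x),
    AWAux.ρhom_A q, AWAux.ρhom_B q, AWAux.ρhom_C q,
    AWAux.σhom_A q hq0 hq4, AWAux.σhom_B q hq0 hq4, AWAux.σhom_C q hq0 hq4,
    fun x => AWAux.ρ3_fix q x, fun x => AWAux.σ2_fix q hq0 hq4 x⟩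
end
end
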